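/- arXiv:1212.5522 — 9 statements merged into one kernel-verified Lean document; each statement's English description precedes it below -/
import Mathlib

section
/- Let B be a finite additive commutative group, n ∈ ℕ, and let c : (Fin n → ℕ) → B be a finitely supported family of coefficients. If Σ_δ (∏_{j} binom(x_j, δ_j)) • c(δ) = 0 for every x ∈ ℤ^n (where • is the ℤ-scalar action on B), then c(δ) = 0 for all δ. In other words, a function ℤ^n → B has at most one polyfract representation. -/
/-- The integer binomial coefficient `binom(x,δ) = x(x-1)⋯(x-δ+1)/δ!`. -/
noncomputable def ibinom (x : ℤ) (δ : ℕ) : ℤ := Ring.choose x δ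

/-- A function `ℤ^n → B` into a finite commutative group has at most one
polyfract representation: if a finitely supported family of coefficients
represents the zero function, then all coefficients vanish. -/
theorem stmt_3 (B : Type*) [AddCommGroup B] [Finite B] (n : ℕ)
    (c : (Fin n → ℕ) →₀ B)
    (h : ∀ x : Fin n → ℤ, (c.sum fun δ b => (∏ j, ibinom (x j) (δ j)) • b) = 0) :
    ∀ δ : Fin n → ℕ, c δ = 0 := by
  suffices H : ∀ N : ℕ, ∀ δ : Fin n → ℕ, (∑ j, δ j) = N → c δ = 0 by
    intro δ; exact H _ δ rfl
  intro N
  induction N using Nat.strong_induction_on with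
  | _ N ih =>
    intro δ hδ
    by_cases hmem : δ ∈ c.support
    · have hx := h (fun j => (δ j : ℤ))
      rw [Finsupp.sum] at hx
      rw [Finset.sum_eq_single δ] at hx
      · simpa [ibinom, Ring.choose_natCast] using hx
      · intro k hk hkδ
        by_cases hle : ∀ j, k j ≤ δ j
        · have hlt : (∑ j, k j) < N := by
            rw [← hδ]
            refine Finset.sum_lt_sum (fun j _ => hle j) ?_
            by_contra hcon
            push_neg at hcon
            exact hkδ (funext fun j => le_antisymm (hle j)
              (le_of_not_gt fun hl => absurd hl (by simpa using hcon j (Finset.mem_univ j))))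
          rw [ih _ hlt k rfl, smul_zero]
        · push_neg at hle
          obtain ⟨j, hj⟩ := hle
          have : (∏ j, ibinom ((δ j : ℤ)) (k j)) = 0 := by
            apply Finset.prod_eq_zero (Finset.mem_univ j)
            simp [ibinom, Ring.choose_natCast, Nat.choose_eq_zero_of_lt hj]
          rw [this, zero_smul]
      · intro hnmem; exact absurd hmem hnmem
    · simpa using hmem
end

section
/- Let B be a finitely generated additive commutative group, n ∈ ℕ, d ∈ ℕ^n, and let c : (Fin n → ℕ) → B be a finitely supported family of coefficients. Define f : ℤ^n → B by f(x) := Σ_δ (∏_{j} binom(x_j, δ_j)) • c(δ), and let [d] := {0,…,d_1} × ⋯ × {0,…,d_n}. Then the following are equivalent: (i) c(δ) = 0 for every δ ∈ [d]; (ii) f(x) = 0 for every x ∈ [d] ⊆ ℤ^n. -/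
lemma ibinom_natCast (m k : ℕ) : ibinom (m : ℤ) k = (Nat.choose m k : ℤ) := by
  simp [ibinom, Ring.choose_natCast]

/-- For a polyfract over a finitely generated commutative group `B` and a grid
`[d] = {0,…,d_1} × ⋯ × {0,…,d_n}`, the coefficients indexed by the grid vanish
iff the polyfractal map vanishes on the grid. -/
theorem stmt_4 (B : Type*) [AddCommGroup B] [AddGroup.FG B] (n : ℕ) (d : Fin n → ℕ)
    (c : (Fin n → ℕ) →₀ B)
    (f : (Fin n → ℤ) → B)
    (hf : ∀ x : Fin n → ℤ, f x = c.sum fun δ b => (∏ j, ibinom (x j) (δ j)) • b) :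
    (∀ δ : Fin n → ℕ, (∀ j, δ j ≤ d j) → c δ = 0) ↔
      (∀ x : Fin n → ℤ, (∀ j, 0 ≤ x j ∧ x j ≤ (d j : ℤ)) → f x = 0) := by
  constructor
  · intro hc x hx
    rw [hf]
    rw [Finsupp.sum]
    apply Finset.sum_eq_zero
    intro δ hδ
    by_cases hle : ∀ j, (δ j : ℤ) ≤ x j
    · have hδd : ∀ j, δ j ≤ d j := fun j => by
        have := (hle j).trans (hx j).2
        exact_mod_cast this
      rw [hc δ hδd, smul_zero]
    · push_neg at hle
      obtain ⟨j, hj⟩ := hle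
      have hx0 := (hx j).1
      obtain ⟨m, hm⟩ := Int.eq_ofNat_of_zero_le hx0
      have : ibinom (x j) (δ j) = 0 := by
        rw [hm, ibinom_natCast, Nat.choose_eq_zero_of_lt]
        · simp
        · have : (m : ℤ) < δ j := hm ▸ hj
          exact_mod_cast this
      rw [Finset.prod_eq_zero (Finset.mem_univ j) this, zero_smul]
  · intro hfz
    -- strong induction on ∑ δ j
    suffices h : ∀ N : ℕ, ∀ δ : Fin n → ℕ, (∑ j, δ j) = N → (∀ j, δ j ≤ d j) → c δ = 0 by
      intro δ hδ; exact h (∑ j, δ j) δ rfl hδ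
    intro N
    induction N using Nat.strong_induction_on with
    | _ N ih =>
      intro δ hN hδd
      have hfd : f (fun j => (δ j : ℤ)) = 0 := by
        apply hfz
        intro j
        exact ⟨Int.ofNat_nonneg _, by exact_mod_cast hδd j⟩
      rw [hf] at hfd
      rw [Finsupp.sum] at hfd
      have key : ∀ δ' ∈ c.support,
          (∏ j, ibinom ((δ j : ℤ)) (δ' j)) • c δ' = if δ' = δ then c δ else 0 := by
        intro δ' _
        by_cases heq : δ' = δ
        · subst heq
          have : ∀ j, ibinom ((δ' j : ℤ)) (δ' j) = 1 := fun j => by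
            rw [ibinom_natCast, Nat.choose_self]; norm_num
          simp [this]
        · rw [if_neg heq]
          by_cases hle : ∀ j, δ' j ≤ δ j
          · have hlt : (∑ j, δ' j) < N := by
              rw [← hN]
              apply Finset.sum_lt_sum (fun j _ => hle j)
              by_contra hcon
              push_neg at hcon
              exact heq (funext fun j => le_antisymm (hle j)
                (hcon j (Finset.mem_univ j)))
            have : c δ' = 0 :=
              ih _ hlt δ' rfl (fun j => (hle j).trans (hδd j))
            rw [this, smul_zero]
          · push_neg at hle
            obtain ⟨j, hj⟩ := hle
            have : ibinom ((δ j : ℤ)) (δ' j) = 0 := by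
              rw [ibinom_natCast, Nat.choose_eq_zero_of_lt hj]; simp
            rw [Finset.prod_eq_zero (Finset.mem_univ j) this, zero_smul]
      rw [Finset.sum_congr rfl key, Finset.sum_ite_eq' c.support δ (fun _ => c δ)] at hfd
      by_cases hmem : δ ∈ c.support
      · rwa [if_pos hmem] at hfd
      · exact Finsupp.notMem_support_iff.mp hmem
end

section
/- Let p be a prime and α ≥ 1. Let g : ZMod(p^α) → ℤ be a function with vanishing value sum, i.e. Σ_{x ∈ ZMod(p^α)} g(x) = 0. Then p divides Δ^{p^α − 1} g(x) for every x ∈ ZMod(p^α). -/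
/-- The discrete derivative (difference operator) `Δf(x) = f(x+1) − f(x)`. -/
def discDeriv {G M : Type*} [Add G] [One G] [Sub M] (f : G → M) : G → M :=
  fun x => f (x + 1) - f x

lemma choose_pow_sub_one_cast (p : ℕ) (hp : p.Prime) (α : ℕ) :
    ∀ k : ℕ, k ≤ p ^ α - 1 → (((p ^ α - 1).choose k : ZMod p) = (-1) ^ k) := by
  have hq : 0 < p ^ α := pow_pos hp.pos α
  intro k
  induction k with
  | zero => simp
  | succ k ih =>
    intro hk
    have hk' : k ≤ p ^ α - 1 := by omega
    have hpascal : (p ^ α).choose (k + 1)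
        = (p ^ α - 1).choose k + (p ^ α - 1).choose (k + 1) := by
      conv_lhs => rw [show p ^ α = (p ^ α - 1) + 1 by omega]
      exact Nat.choose_succ_succ _ _
    have hdvd : p ∣ (p ^ α).choose (k + 1) :=
      Nat.Prime.dvd_choose_pow hp (by omega) (by omega)
    have h0 : (((p ^ α).choose (k + 1) : ℕ) : ZMod p) = 0 :=
      (ZMod.natCast_eq_zero_iff _ _).mpr hdvd
    have := congrArg (fun n : ℕ => (n : ZMod p)) hpascal
    simp only [Nat.cast_add, h0, ih hk'] at this
    have : ((p ^ α - 1).choose (k + 1) : ZMod p) = -(-1) ^ k := by linear_combination -this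
    rw [this, pow_succ]; ring

/-- If `g : ZMod(p^α) → ℤ` has vanishing value sum, then `p` divides
`Δ^{p^α−1} g(x)` for every `x`. -/
theorem stmt_6 (p : ℕ) (hp : p.Prime) (α : ℕ) (hα : 1 ≤ α)
    (g : ZMod (p ^ α) → ℤ)
    (hsum : haveI : NeZero (p ^ α) := ⟨pow_ne_zero α hp.ne_zero⟩
      ∑ x : ZMod (p ^ α), g x = 0) :
    ∀ x : ZMod (p ^ α), (p : ℤ) ∣ discDeriv^[p ^ α - 1] g x := by
  haveI : NeZero (p ^ α) := ⟨pow_ne_zero α hp.ne_zero⟩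
  have hq : 0 < p ^ α := pow_pos hp.pos α
  intro x
  have hdd : discDeriv g = fwdDiff (1 : ZMod (p ^ α)) g := rfl
  have hdd' : discDeriv^[p ^ α - 1] g = (fwdDiff (1 : ZMod (p ^ α)))^[p ^ α - 1] g := by
    clear hdd
    induction (p ^ α - 1) with
    | zero => rfl
    | succ n ih => rw [Function.iterate_succ_apply', Function.iterate_succ_apply', ih]; rfl
  rw [hdd', fwdDiff_iter_eq_sum_shift]
  rw [← ZMod.intCast_zmod_eq_zero_iff_dvd]
  push_cast
  have hsumcast : ∑ k ∈ Finset.range (p ^ α - 1 + 1),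
      ((-1 : ZMod p) ^ (p ^ α - 1 - k) * ((p ^ α - 1).choose k : ZMod p)) * (g (x + k • 1) : ZMod p)
      = (-1 : ZMod p) ^ (p ^ α - 1) * ∑ k ∈ Finset.range (p ^ α - 1 + 1), (g (x + k • 1) : ZMod p) := by
    rw [Finset.mul_sum]
    refine Finset.sum_congr rfl fun k hk => ?_
    rw [Finset.mem_range] at hk
    rw [choose_pow_sub_one_cast p hp α k (by omega), ← pow_add,
      Nat.sub_add_cancel (by omega)]
  have hshift : ∑ k ∈ Finset.range (p ^ α - 1 + 1), g (x + k • (1 : ZMod (p ^ α))) = 0 := by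
    rw [← hsum]
    apply Finset.sum_nbij' (i := fun k => x + (k • (1 : ZMod (p ^ α))))
      (j := fun y => (y - x).val)
    · intro k _; exact Finset.mem_univ _
    · intro y _
      rw [Finset.mem_range]
      have := ZMod.val_lt (y - x)
      omega
    · intro k hk
      rw [Finset.mem_range] at hk
      simp only [smul_eq_mul, nsmul_eq_mul, mul_one]
      rw [add_sub_cancel_left, ZMod.val_cast_of_lt (by omega)]
    · intro y _
      simp only [smul_eq_mul, nsmul_eq_mul, mul_one]
      rw [ZMod.natCast_rightInverse (y - x)]; ring
    · intro k _; rfl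
  simp only [zsmul_eq_mul]
  push_cast
  rw [hsumcast]
  have : ∑ k ∈ Finset.range (p ^ α - 1 + 1), ((g (x + k • 1) : ℤ) : ZMod p) = 0 := by
    rw [← Int.cast_sum, hshift, Int.cast_zero]
  rw [this, mul_zero]
end

section
/- Let p be a prime, α ≥ 1 and β ∈ ℕ. For every function f : ZMod(p^α) → ℤ and every x ∈ ZMod(p^α), the prime power p^β divides Δ^{(β(p−1)+1)·p^{α−1}} f(x). -/
open Finset

section DivisibilityInRings

variable {R : Type*} [CommRing R]

theorem pow_mul_add_one_eq_of_pow_succ_eq {M : Type*} [CommMonoid M] {w a : M} {d : ℕ}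
    (h : w ^ (d + 1) = a * w) (γ : ℕ) : w ^ (γ * d + 1) = a ^ γ * w := by
  induction γ with
  | zero => simp
  | succ γ ih =>
    calc w ^ ((γ + 1) * d + 1) = w ^ d * w ^ (γ * d + 1) := by rw [← pow_add]; ring_nf
      _ = a ^ γ * w ^ (d + 1) := by rw [ih, pow_succ]; ac_rfl
      _ = a ^ (γ + 1) * w := by rw [h, pow_succ, mul_assoc]

theorem Nat.Prime.exists_sub_one_pow_eq_mul_sub_one {p : ℕ} (hp : p.Prime) {u : R}
    (hu : u ^ p = 1) : ∃ c, (u - 1) ^ p = p * c * (u - 1) := by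
  obtain ⟨d, rfl⟩ : ∃ d, p = d + 1 := ⟨p - 1, (Nat.sub_add_cancel hp.one_le).symm⟩
  have hgeom : ∑ i ∈ range (d + 1), u ^ i
      = ∑ i ∈ range d, ((d + 1).choose (i + 1) : R) * (u - 1) ^ i + (u - 1) ^ d := by
    have := congrArg (Polynomial.eval (u - 1))
      (Polynomial.geom_sum_X_comp_X_add_one_eq_sum (R := R) (d + 1))
    simpa [Polynomial.eval_finsetSum, sum_range_succ] using this
  obtain ⟨c, hc⟩ : (↑(d + 1) : R) ∣ ∑ i ∈ range d, ((d + 1).choose (i + 1) : R) * (u - 1) ^ i :=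
    dvd_sum fun i hi => dvd_mul_of_dvd_left
      (Nat.cast_dvd_cast (hp.dvd_choose_self i.succ_ne_zero (by simpa using hi))) _
  refine ⟨-c, ?_⟩
  have hzero : (∑ i ∈ range (d + 1), u ^ i) * (u - 1) = 0 := by rw [geom_sum_mul, hu, sub_self]
  rw [hgeom, hc] at hzero
  linear_combination hzero

theorem Nat.Prime.dvd_sub_one_pow_prime_pow_sub {p : ℕ} (hp : p.Prime) (v : R) (k : ℕ) :
    (p : R) ∣ (v - 1) ^ p ^ k - (v ^ p ^ k - 1) := by
  obtain ⟨r, hr⟩ := exists_add_pow_prime_pow_eq hp v (-1) k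
  obtain ⟨s, hs⟩ := exists_add_pow_prime_pow_eq hp (1 : R) (-1) k
  rw [add_neg_cancel, zero_pow (pow_ne_zero k hp.ne_zero)] at hs
  exact ⟨-v * r + s, by rw [sub_eq_add_neg v, hr]; linear_combination -hs⟩

theorem pow_dvd_add_mul_pow {π y c t : R} {d : ℕ} (hd : 1 ≤ d) (hy : y ^ (d + 1) = π * c * y)
    (β : ℕ) : π ^ β ∣ (y + π * t) ^ (β * d + 1) := by
  have hdvd : ∀ γ a, γ * d + 1 ≤ a → π ^ γ ∣ y ^ a := fun γ a ha => by
    rw [← pow_sub_mul_pow y ha, pow_mul_add_one_eq_of_pow_succ_eq hy, mul_pow]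
    exact dvd_mul_of_dvd_right (dvd_mul_of_dvd_left (dvd_mul_right _ _) _) _
  have hπt : ∀ b, π ^ b ∣ (π * t) ^ b := fun b => mul_pow π t b ▸ dvd_mul_right _ _
  rw [(Commute.all y (π * t)).add_pow']
  refine dvd_sum fun ⟨a, b⟩ hab => ?_
  rw [HasAntidiagonal.mem_antidiagonal] at hab
  rw [nsmul_eq_mul]
  refine dvd_mul_of_dvd_right ?_ _
  rcases le_or_gt β b with hb | hb
  · exact dvd_mul_of_dvd_right ((pow_dvd_pow π hb).trans (hπt b)) _
  · obtain ⟨γ, rfl⟩ := Nat.exists_eq_add_of_le' hb.le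
    rw [pow_add]
    exact mul_dvd_mul (hdvd γ a (by nlinarith [Nat.mul_le_mul_left b hd])) (hπt b)

theorem Nat.Prime.pow_dvd_sub_one_pow {p : ℕ} (hp : p.Prime) {v : R} {a : ℕ}
    (hv : v ^ p ^ (a + 1) = 1) (β : ℕ) :
    (p : R) ^ β ∣ (v - 1) ^ ((β * (p - 1) + 1) * p ^ a) := by
  obtain ⟨c, hc⟩ := hp.exists_sub_one_pow_eq_mul_sub_one (u := v ^ p ^ a)
    (by rw [← pow_mul, ← pow_succ, hv])
  obtain ⟨t, ht⟩ := hp.dvd_sub_one_pow_prime_pow_sub v a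
  rw [mul_comm, pow_mul, sub_eq_iff_eq_add'.mp ht]
  exact pow_dvd_add_mul_pow (Nat.le_sub_one_of_lt hp.one_lt)
    (by rwa [Nat.sub_add_cancel hp.one_le]) β

end DivisibilityInRings

namespace AddMonoidAlgebra

theorem natCast_dvd_coeff {k G : Type*} [Semiring k] [AddMonoid G] {n : ℕ}
    {F : AddMonoidAlgebra k G} (h : (n : AddMonoidAlgebra k G) ∣ F) (x : G) :
    (n : k) ∣ F.coeff x := by
  obtain ⟨H, rfl⟩ := h
  rw [← nsmul_eq_mul, coeff_smul_apply, nsmul_eq_mul]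
  exact dvd_mul_right _ _

theorem single_neg_one_pow_eq_one {k : Type*} [Semiring k] (n : ℕ) :
    single (-1 : ZMod n) (1 : k) ^ n = 1 := by
  rw [single_pow, one_pow, nsmul_eq_mul, ZMod.natCast_self, zero_mul, one_def]

theorem discDeriv_iterate_coeff {k G : Type*} [Ring k] [AddCommGroup G] [One G]
    (F : AddMonoidAlgebra k G) (n : ℕ) :
    discDeriv^[n] (fun x => F.coeff x) = fun x => ((single (-1) 1 - 1) ^ n * F).coeff x := by
  induction n with
  | zero => simp
  | succ n ih =>
    funext x
    rw [Function.iterate_succ_apply', ih, pow_succ', mul_assoc, sub_mul, one_mul, coeff_sub,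
      Finsupp.sub_apply, coeff_single_mul_apply, neg_neg, one_mul, add_comm]
    rfl

end AddMonoidAlgebra

theorem stmt_7_general (p : ℕ) (hp : p.Prime) (α : ℕ) (β : ℕ)
    (f : ZMod (p ^ α) → ℤ) :
    ∀ x : ZMod (p ^ α),
      (p : ℤ) ^ β ∣ discDeriv^[(β * (p - 1) + 1) * p ^ (α - 1)] f x := by
  intro x
  have : NeZero (p ^ α) := ⟨pow_ne_zero α hp.ne_zero⟩
  let F : AddMonoidAlgebra ℤ (ZMod (p ^ α)) :=
    AddMonoidAlgebra.ofCoeff (Finsupp.equivFunOnFinite.symm f)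
  have hT : AddMonoidAlgebra.single (-1 : ZMod (p ^ α)) (1 : ℤ) ^ p ^ (α - 1 + 1) = 1 := by
    obtain ⟨m, hm⟩ := pow_dvd_pow p (show α ≤ α - 1 + 1 by omega)
    rw [hm, pow_mul, AddMonoidAlgebra.single_neg_one_pow_eq_one, one_pow]
  have hdvd := hp.pow_dvd_sub_one_pow hT β
  rw [show f = fun y => F.coeff y from rfl, AddMonoidAlgebra.discDeriv_iterate_coeff]
  exact AddMonoidAlgebra.natCast_dvd_coeff (by exact_mod_cast dvd_mul_of_dvd_left hdvd F) x

/-- For every function `f : ZMod(p^α) → ℤ` and every `β`, the prime power `p^β`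
divides `Δ^{(β(p−1)+1)·p^{α−1}} f(x)` for every `x`. -/
theorem stmt_7 (p : ℕ) (hp : p.Prime) (α : ℕ) (hα : 1 ≤ α) (β : ℕ)
    (f : ZMod (p ^ α) → ℤ) :
    ∀ x : ZMod (p ^ α),
      (p : ℤ) ^ β ∣ discDeriv^[(β * (p - 1) + 1) * p ^ (α - 1)] f x :=
  stmt_7_general p hp α β f
end

section
/- Let p be a prime, α ≥ 1, β ∈ ℕ, and let δ ∈ ℕ satisfy δ ≥ (β(p−1)+1)·p^{α−1}. Then for every x ∈ ℤ, p^β divides coChoose_{p^α}(δ, x) = Σ_{0 ≤ j ≤ δ, j ≡ x (mod p^α)} (−1)^j · C(δ, j), where C(δ,j) denotes the usual binomial coefficient. (This generalizes Fleck's divisibility relation.) -/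
/-!
Work in the group ring `A = ℤ[ℤ/p^α]` with generator `X`: `coChoose_{p^α}(δ, x)` is the
coefficient of `(1 - X)^δ` at `x`. Put `Y = X^{p^{α-1}}`, of order `p`, `N = 1 + Y + ⋯ + Y^{p-1}`
and `s = (1 - X)^{p^{α-1}}`. Modulo `p` one has `s ≡ 1 - Y` and `(1 - Y)^{p-1} ≡ N`, while
`(1 - Y) N = 0` and `N² = p N`. Hence `s^{p-1} ∈ N + pA` and `sN ∈ pAN`, so every further
factor `s^{p-1}` of `s^{β(p-1)+1}` contributes one more factor `p`.
-/

/-- The co-monofract value `coChoose q d y = Σ_{0 ≤ j ≤ d, j ≡ y (mod q)} (−1)^j · C(d,j)`. -/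
def coChoose (q d : ℕ) (y : ℤ) : ℤ :=
  ∑ j ∈ Finset.range (d + 1),
    if (q : ℤ) ∣ ((j : ℤ) - y) then (-1) ^ j * (d.choose j : ℤ) else 0

open Finset

section Polynomial

open Polynomial

theorem Polynomial.one_sub_X_pow_pred_eq_geom_sum {R : Type*} [CommRing R] [IsDomain R] {p : ℕ}
    [ExpChar R p] : (1 - X : R[X]) ^ (p - 1) = ∑ k ∈ range p, X ^ k := by
  refine mul_left_cancel₀ (a := (1 - X : R[X])) ?_ ?_
  · simpa using neg_ne_zero.mpr (X_sub_C_ne_zero (1 : R))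
  · rw [← pow_succ', Nat.sub_add_cancel (expChar_pos R p), sub_pow_expChar, mul_neg_geom_sum,
      one_pow]

theorem Polynomial.natCast_dvd_of_map_eq_zero {p : ℕ} {f : ℤ[X]}
    (h : f.map (Int.castRingHom (ZMod p)) = 0) : (p : ℤ[X]) ∣ f := by
  rw [← map_natCast C, C_dvd_iff_dvd_coeff]
  intro i
  simpa only [coeff_map, eq_intCast, coeff_zero, ZMod.intCast_zmod_eq_zero_iff_dvd,
    Int.cast_natCast] using congrArg (coeff · i) h

theorem natCast_dvd_one_sub_pow_pred_sub_geom_sum {A : Type*} [CommRing A] {p : ℕ}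
    (hp : p.Prime) (Y : A) : (p : A) ∣ (1 - Y) ^ (p - 1) - ∑ k ∈ range p, Y ^ k := by
  have : Fact p.Prime := ⟨hp⟩
  have hZ : (p : ℤ[X]) ∣ (1 - X) ^ (p - 1) - ∑ k ∈ range p, X ^ k :=
    natCast_dvd_of_map_eq_zero <| by
      simpa [Polynomial.map_sum, sub_eq_zero] using one_sub_X_pow_pred_eq_geom_sum (R := ZMod p)
  simpa using map_dvd (aeval Y) hZ

end Polynomial

section CommRing

variable {A : Type*} [CommRing A] {p : ℕ}

theorem pow_dvd_pow_mul_add_one_of_pow_eq {P s N c a : A} {k : ℕ} (hs : s ^ k = N + P * c)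
    (hsN : s * N = P * (a * N)) (hN : N * N = P * N) (b : ℕ) : P ^ b ∣ s ^ (b * k + 1) := by
  suffices ∃ u v, s ^ (b * k + 1) = P ^ b * u ∧ u * N = P * (v * N) by
    obtain ⟨u, -, hu, -⟩ := this
    exact ⟨u, hu⟩
  induction b with
  | zero => exact ⟨s, a, by simp, hsN⟩
  | succ b ih =>
    obtain ⟨u, v, hu, huN⟩ := ih
    refine ⟨v * N + u * c, v + c * v, ?_, by linear_combination v * hN + c * huN⟩
    rw [add_one_mul, add_right_comm, pow_add, hu, hs]
    linear_combination P ^ b * huN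

theorem geom_sum_mul_self_of_pow_eq_one {Y : A} {m : ℕ} (hY : Y ^ m = 1) :
    (∑ k ∈ range m, Y ^ k) * ∑ k ∈ range m, Y ^ k = m * ∑ k ∈ range m, Y ^ k := by
  set N := ∑ k ∈ range m, Y ^ k
  have hYN : Y * N = N := by
    linear_combination -(mul_neg_geom_sum Y m) + hY
  have hpowN : ∀ k, Y ^ k * N = N := by
    intro k
    induction k with
    | zero => rw [pow_zero, one_mul]
    | succ k ih => rw [pow_succ', mul_assoc, ih, hYN]
  rw [sum_mul]
  simp [hpowN]

theorem natCast_dvd_one_sub_pow_prime_pow_sub (hp : p.Prime) (X : A) (n : ℕ) :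
    (p : A) ∣ (1 - X) ^ p ^ n - (1 - X ^ p ^ n) := by
  obtain ⟨r, hr⟩ := exists_add_pow_prime_pow_eq hp X (1 - X) n
  rw [add_sub_cancel, one_pow] at hr
  exact ⟨-(X * (1 - X) * r), by linear_combination -hr⟩

theorem natCast_pow_dvd_one_sub_pow (hp : p.Prime) {X : A} {n : ℕ}
    (hX : X ^ p ^ (n + 1) = 1) {β δ : ℕ} (hδ : (β * (p - 1) + 1) * p ^ n ≤ δ) :
    (p : A) ^ β ∣ (1 - X) ^ δ := by
  set Y := X ^ p ^ n
  set N := ∑ k ∈ range p, Y ^ k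
  set s := (1 - X) ^ p ^ n
  have hY : Y ^ p = 1 := by rw [← pow_mul, ← pow_succ, hX]
  obtain ⟨a, ha⟩ := natCast_dvd_one_sub_pow_prime_pow_sub hp X n
  obtain ⟨c, hc⟩ : (p : A) ∣ s ^ (p - 1) - N := by
    have := (dvd_trans ⟨a, ha⟩ (sub_dvd_pow_sub_pow _ _ (p - 1))).add
      (natCast_dvd_one_sub_pow_pred_sub_geom_sum hp Y)
    rwa [sub_add_sub_cancel] at this
  have hsN : s * N = p * (a * N) := by
    linear_combination N * ha + mul_neg_geom_sum Y p - hY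
  have key := pow_dvd_pow_mul_add_one_of_pow_eq (eq_add_of_sub_eq' hc) hsN
    (geom_sum_mul_self_of_pow_eq_one hY) β
  refine key.trans ?_
  rw [← pow_mul, mul_comm]
  exact pow_dvd_pow _ hδ

end CommRing

open AddMonoidAlgebra

theorem AddMonoidAlgebra.dvd_coeff_of_intCast_dvd {G : Type*} [AddMonoid G] {m : ℤ}
    {f : AddMonoidAlgebra ℤ G} (h : (m : AddMonoidAlgebra ℤ G) ∣ f) (g : G) :
    m ∣ f.coeff g := by
  obtain ⟨w, rfl⟩ := h
  rw [← zsmul_eq_mul, coeff_smul_apply, smul_eq_mul]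
  exact dvd_mul_right m (w.coeff g)

theorem one_sub_single_one_pow_eq_sum (q d : ℕ) :
    (1 - single (1 : ZMod q) 1 : AddMonoidAlgebra ℤ (ZMod q)) ^ d =
      ∑ j ∈ range (d + 1), single (j : ZMod q) ((-1) ^ j * (d.choose j : ℤ)) := by
  rw [sub_eq_neg_add, add_pow]
  refine sum_congr rfl fun j _ => ?_
  rw [one_pow, mul_one, ← single_neg, single_pow, natCast_def, single_mul_single, add_zero,
    nsmul_one]

theorem coChoose_eq_coeff_one_sub_single_one_pow (q d : ℕ) (x : ℤ) :
    coChoose q d x = ((1 - single (1 : ZMod q) 1 : AddMonoidAlgebra ℤ (ZMod q)) ^ d).coeff x := by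
  classical
  rw [one_sub_single_one_pow_eq_sum, coeff_sum, Finsupp.finsetSum_apply, coChoose]
  refine sum_congr rfl fun j _ => ?_
  rw [coeff_single, Finsupp.single_apply, ← Int.cast_natCast (R := ZMod q) j]
  exact if_congr (by rw [ZMod.intCast_eq_intCast_iff_dvd_sub, dvd_sub_comm]) rfl rfl

theorem single_one_pow_card (q : ℕ) :
    (single (1 : ZMod q) 1 : AddMonoidAlgebra ℤ (ZMod q)) ^ q = 1 := by
  rw [single_pow, nsmul_one, ZMod.natCast_self, one_pow, one_def]

/-- Generalized Fleck divisibility: if `δ ≥ (β(p−1)+1)·p^{α−1}` then `p^β` divides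
`coChoose_{p^α}(δ, x)` for every integer `x`. -/
theorem stmt_8 (p : ℕ) (hp : p.Prime) (α : ℕ) (hα : 1 ≤ α) (β : ℕ) (δ : ℕ)
    (hδ : (β * (p - 1) + 1) * p ^ (α - 1) ≤ δ) :
    ∀ x : ℤ, (p : ℤ) ^ β ∣ coChoose (p ^ α) δ x := by
  intro x
  obtain ⟨n, rfl⟩ : ∃ n, α = n + 1 := ⟨α - 1, by omega⟩
  rw [coChoose_eq_coeff_one_sub_single_one_pow]
  refine dvd_coeff_of_intCast_dvd ?_ _
  rw [Int.cast_pow, Int.cast_natCast]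
  exact natCast_pow_dvd_one_sub_pow hp (single_one_pow_card _) (by simpa using hδ)
end

section
/- Let p be a prime, n ≥ 1, α_1,…,α_n ≥ 1, and let B be a finite additive commutative group whose cardinality is a power of p. Let f : ℤ^n → B be a function that is p^{α_j}-periodic in the j-th variable for each j, i.e. f(x + p^{α_j}·e_j) = f(x) for all x ∈ ℤ^n and all j. Then f is polyfractal: there exists a finitely supported family c : (Fin n → ℕ) → B with f(x) = Σ_δ (∏_{j} binom(x_j, δ_j)) • c(δ) for all x ∈ ℤ^n. -/
open Finset Function Polynomial fwdDiff_aux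
-- `Δ_[h] ^[n]` needs the space: `]^` is a token of the exterior power notation `⋀[R]^n`.
open scoped fwdDiff

theorem Polynomial.exists_X_sub_one_pow_eq {p : ℕ} (hp : p.Prime) (a k : ℕ) :
    ∃ A R : ℤ[X], (X - 1) ^ (p ^ a * k) = A * (X ^ p ^ a - 1) + (p : ℤ[X]) ^ k * R := by
  have := Fact.mk hp
  -- Frobenius in `(ZMod p)[X]`
  obtain ⟨r, hr⟩ : (p : ℤ[X]) ∣ (X - 1) ^ p ^ a - (X ^ p ^ a - 1) := by
    have hker : (X - 1) ^ p ^ a - (X ^ p ^ a - 1) ∈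
        RingHom.ker (mapRingHom (Int.castRingHom (ZMod p))) := by
      simp [RingHom.mem_ker, sub_pow_char_pow]
    rwa [ker_mapRingHom, ZMod.ker_intCastRingHom, Ideal.map_span, Set.image_singleton,
      Ideal.mem_span_singleton, map_natCast] at hker
  obtain ⟨A, hA⟩ := sub_dvd_pow_sub_pow ((X - 1) ^ p ^ a) (p * r) k
  exact ⟨A, r ^ k, by rw [pow_mul]; linear_combination hA + A * hr⟩

theorem Module.End.sub_one_pow_apply_eq_zero {V : Type*} [AddCommGroup V] {p : ℕ} (hp : p.Prime)
    {a k : ℕ} (hV : ∀ w : V, p ^ k • w = 0) (T : Module.End ℤ V) {v : V}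
    (hv : (T ^ p ^ a) v = v) : ((T - 1) ^ (p ^ a * k)) v = 0 := by
  obtain ⟨A, R, hAR⟩ := Polynomial.exists_X_sub_one_pow_eq hp a k
  have := congr(aeval T $hAR)
  simp only [map_pow, map_sub, map_add, map_mul, aeval_X, map_one, map_natCast] at this
  rw [this, LinearMap.add_apply, Module.End.mul_apply, Module.End.mul_apply, LinearMap.sub_apply,
    hv, Module.End.one_apply, sub_self, map_zero, zero_add, ← Nat.cast_pow,
    Module.End.natCast_apply, hV]

section fwdDiff

variable {M B : Type*} [AddCommGroup B]

theorem fwdDiff_iter_eq_zero_of_periodic [AddCommMonoid M] {p : ℕ} (hp : p.Prime) {a k : ℕ}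
    (hB : ∀ b : B, p ^ k • b = 0) {h : M} {f : M → B} (hf : Periodic f (p ^ a • h)) :
    Δ_[h] ^[p ^ a * k] f = 0 := by
  rw [← coe_fwdDiffₗ_pow, show fwdDiffₗ M B h = shiftₗ M B h - 1 from
    (add_sub_cancel_right _ _).symm]
  exact Module.End.sub_one_pow_apply_eq_zero hp (fun w => funext fun y => hB (w y)) _
    (funext fun y => by rw [shiftₗ_pow_apply, hf])

theorem fwdDiff_comm [AddCommMonoid M] (h h' : M) (f : M → B) :
    Δ_[h] (Δ_[h'] f) = Δ_[h'] (Δ_[h] f) := by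
  funext x
  simp only [fwdDiff, add_right_comm x h h']
  abel

theorem fwdDiff_iter_comm [AddCommMonoid M] (h h' : M) (a b : ℕ) (f : M → B) :
    Δ_[h] ^[a] (Δ_[h'] ^[b] f) = Δ_[h'] ^[b] (Δ_[h] ^[a] f) :=
  (Function.Commute.iterate_iterate (fun f => fwdDiff_comm h h' f) a b).eq f

theorem fwdDiff_iter_zero [AddCommMonoid M] (h : M) (a : ℕ) : Δ_[h] ^[a] (0 : M → B) = 0 :=
  iterate_fixed (fwdDiff_const h 0) a

theorem fwdDiff_iter_comp_addMonoidHom {M' : Type*} [AddCommMonoid M'] [AddCommMonoid M]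
    (φ : M' →+ M) (h : M') (F : M → B) (n : ℕ) :
    Δ_[h] ^[n] (F ∘ φ) = Δ_[φ h] ^[n] F ∘ φ := by
  funext y
  simp [fwdDiff_iter_eq_sum_shift]

theorem sum_range_succ_choose_add_one_smul (N : ℕ) (x : ℤ) (c : ℕ → B) :
    ∑ a ∈ range (N + 1), Ring.choose (x + 1) a • c a =
      ∑ a ∈ range (N + 1), Ring.choose x a • c a + ∑ a ∈ range N, Ring.choose x a • c (a + 1) := by
  simp only [sum_range_succ' _ N, Ring.choose_succ_succ, add_smul, sum_add_distrib,
    Ring.choose_zero_right]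
  abel

theorem shift_zsmul_eq_sum_fwdDiff_iter [AddCommGroup M] {h : M} {N : ℕ} {g : M → B}
    (hg : Δ_[h] ^[N] g = 0) (y : M) (x : ℤ) :
    g (y + x • h) = ∑ a ∈ range N, Ring.choose x a • Δ_[h] ^[a] g y := by
  induction N generalizing g x with
  | zero => simp [show g = 0 from hg]
  | succ N ih =>
    have hΔ (x : ℤ) := ih (g := Δ_[h] g) (by rwa [← iterate_succ_apply]) x
    set R : ℤ → B := fun x => g (y + x • h) - ∑ a ∈ range (N + 1), Ring.choose x a • Δ_[h] ^[a] g y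
    have hR : Periodic R 1 := fun x => by
      have := hΔ x
      simp only [fwdDiff, ← iterate_succ_apply] at this
      simp only [R, sum_range_succ_choose_add_one_smul, add_smul, one_smul, ← add_assoc, ← this]
      abel
    simpa [R, sum_range_succ', sub_eq_zero, Ring.choose_zero_succ] using hR.int_mul_eq x

end fwdDiff

section polyfractal

variable (n : ℕ) (B : Type*) [AddCommGroup B]

def polyfractal : AddSubgroup ((Fin n → ℤ) → B) where
  carrier := {f | ∃ c : (Fin n → ℕ) →₀ B,
    ∀ x, f x = c.sum fun δ b => (∏ j, ibinom (x j) (δ j)) • b}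
  add_mem' := by
    rintro f g ⟨c, hc⟩ ⟨d, hd⟩
    exact ⟨c + d, fun x => by
      rw [Pi.add_apply, hc, hd, Finsupp.sum_add_index' (by simp) fun _ _ _ => smul_add _ _ _]⟩
  zero_mem' := ⟨0, fun x => by simp⟩
  neg_mem' := by
    rintro f ⟨c, hc⟩
    exact ⟨-c, fun x => by simp [hc, Finsupp.sum_neg_index]⟩

variable {n B}

theorem const_mem_polyfractal_zero (f : (Fin 0 → ℤ) → B) : f ∈ polyfractal 0 B :=
  ⟨Finsupp.single 0 (f 0), fun x => by simp [Subsingleton.elim x 0]⟩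

theorem ibinom_smul_comp_tail_mem_polyfractal {g : (Fin n → ℤ) → B} (hg : g ∈ polyfractal n B)
    (a : ℕ) :
    (fun x : Fin (n + 1) → ℤ => ibinom (x 0) a • g (Fin.tail x)) ∈ polyfractal (n + 1) B := by
  obtain ⟨c, hc⟩ := hg
  refine ⟨c.mapDomain (Fin.cons a), fun x => ?_⟩
  dsimp only
  rw [hc, Finsupp.sum_mapDomain_index (by simp) fun _ _ _ => smul_add _ _ _, Finsupp.smul_sum]
  simp [Fin.prod_univ_succ, mul_smul, Fin.tail]

theorem mem_polyfractal_of_fwdDiff_iter_eq_zero : ∀ {n : ℕ} (f : (Fin n → ℤ) → B),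
    (∀ j, ∃ N, Δ_[Pi.single j 1] ^[N] f = 0) → f ∈ polyfractal n B
  | 0, f, _ => const_mem_polyfractal_zero f
  | n + 1, f, hf => by
    let ι : (Fin n → ℤ) →+ (Fin (n + 1) → ℤ) :=
      (Fin.consLinearEquiv ℤ fun _ => ℤ).toAddMonoidHom.comp (AddMonoidHom.inr ℤ (Fin n → ℤ))
    have hι (y : Fin n → ℤ) : ι y = Fin.cons 0 y := rfl
    obtain ⟨N, hN⟩ := hf 0
    have slice_mem (a : ℕ) : Δ_[Pi.single 0 1] ^[a] f ∘ ι ∈ polyfractal n B := by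
      refine mem_polyfractal_of_fwdDiff_iter_eq_zero _ fun j => ?_
      obtain ⟨M, hM⟩ := hf j.succ
      have hιj : ι (Pi.single j 1) = Pi.single j.succ 1 := by
        ext i; refine Fin.cases ?_ (fun i => ?_) i <;> simp [hι, Pi.single_apply]
      refine ⟨M, ?_⟩
      rw [fwdDiff_iter_comp_addMonoidHom, hιj, fwdDiff_iter_comm, hM, fwdDiff_iter_zero]
      rfl
    have newton : f = ∑ a ∈ range N,
        fun x => ibinom (x 0) a • (Δ_[Pi.single 0 1] ^[a] f ∘ ι) (Fin.tail x) := by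
      funext x
      have hx : x = ι (Fin.tail x) + x 0 • Pi.single 0 1 := by
        ext i; refine Fin.cases ?_ (fun i => ?_) i <;> simp [hι, Fin.tail]
      rw [Finset.sum_apply]
      conv_lhs => rw [hx]
      exact shift_zsmul_eq_sum_fwdDiff_iter hN _ _
    rw [newton]
    exact sum_mem fun a _ => ibinom_smul_comp_tail_mem_polyfractal (slice_mem a) a

end polyfractal

theorem stmt_10_general (p : ℕ) (hp : p.Prime) (n : ℕ) (α : Fin n → ℕ)
    (B : Type*) [AddCommGroup B] (hB : ∃ k : ℕ, Nat.card B = p ^ k)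
    (f : (Fin n → ℤ) → B)
    (hper : ∀ (x : Fin n → ℤ) (j : Fin n),
      f (Function.update x j (x j + p ^ α j)) = f x) :
    ∃ c : (Fin n → ℕ) →₀ B,
      ∀ x : Fin n → ℤ, f x = c.sum fun δ b => (∏ j, ibinom (x j) (δ j)) • b := by
  obtain ⟨k, hk⟩ := hB
  have hkill (b : B) : p ^ k • b = 0 := hk ▸ card_nsmul_eq_zero'
  refine mem_polyfractal_of_fwdDiff_iter_eq_zero f fun j =>
    ⟨p ^ α j * k, fwdDiff_iter_eq_zero_of_periodic hp hkill fun x => ?_⟩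
  rw [← hper x j]
  congr 1
  ext i
  rcases eq_or_ne i j with rfl | hij <;> simp [*]

/-- If `B` is a finite commutative `p`-group and `f : ℤ^n → B` is `p^{α_j}`-periodic
in the `j`-th variable for each `j`, then `f` is polyfractal. -/
theorem stmt_10 (p : ℕ) (hp : p.Prime) (n : ℕ) (hn : 1 ≤ n) (α : Fin n → ℕ)
    (hα : ∀ j, 1 ≤ α j)
    (B : Type*) [AddCommGroup B] [Finite B] (hB : ∃ k : ℕ, Nat.card B = p ^ k)
    (f : (Fin n → ℤ) → B)
    (hper : ∀ (x : Fin n → ℤ) (j : Fin n),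
      f (Function.update x j (x j + p ^ α j)) = f x) :
    ∃ c : (Fin n → ℕ) →₀ B,
      ∀ x : Fin n → ℤ, f x = c.sum fun δ b => (∏ j, ibinom (x j) (δ j)) • b :=
  stmt_10_general p hp n α B hB f hper
end

section
/- Let r ∈ ℕ, q ≥ 1, let c : ℕ → ZMod r be a finitely supported family of coefficients, and define f : ℤ → ZMod r by f(x) := Σ_δ c(δ)·binom(x,δ). Then the following are equivalent: (i) f is q-periodic, i.e. f(x+q) = f(x) for all x ∈ ℤ; (ii) for every δ ∈ ℕ, Σ_{j=1}^{q} C(q,j)·c(δ+j) = 0 in ZMod r, where C(q,j) is the usual binomial coefficient cast into ZMod r. -/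
open Finset fwdDiff

section NewtonSum

variable {M : Type*} [AddCommGroup M]

noncomputable def newtonSum (N : ℕ) (c : ℕ → M) (x : ℤ) : M :=
  ∑ δ ∈ range N, Ring.choose x δ • c δ

theorem fwdDiff_newtonSum_succ (N : ℕ) (c : ℕ → M) :
    Δ_[1] (newtonSum (N + 1) c) = newtonSum N (fun δ ↦ c (δ + 1)) := by
  ext x
  simp [fwdDiff, newtonSum, sum_range_succ' _ N, Ring.choose_succ_succ, add_smul, sum_add_distrib]

theorem newtonSum_eq_of_le {N N' : ℕ} {c : ℕ → M} (hc : ∀ δ, N ≤ δ → c δ = 0) (h : N ≤ N') :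
    newtonSum N' c = newtonSum N c := by
  ext x
  refine (sum_subset (range_subset_range.2 h) fun δ _ hδ ↦ ?_).symm
  rw [hc δ (by simpa using hδ), smul_zero]

theorem fwdDiff_iter_newtonSum {N : ℕ} {c : ℕ → M} (hc : ∀ δ, N ≤ δ → c δ = 0) (k : ℕ) :
    (Δ_[1])^[k] (newtonSum N c) = newtonSum N (fun δ ↦ c (δ + k)) := by
  induction k generalizing c with
  | zero => rfl
  | succ k ih =>
    rw [Function.iterate_succ_apply, ← newtonSum_eq_of_le hc N.le_succ, fwdDiff_newtonSum_succ,
      ih (fun δ hδ ↦ hc _ (by omega))]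
    simp only [add_assoc]

theorem newtonSum_apply_zero {N : ℕ} {c : ℕ → M} (hc : ∀ δ, N ≤ δ → c δ = 0) :
    newtonSum N c 0 = c 0 := by
  rcases N.eq_zero_or_pos with rfl | hN
  · simp [newtonSum, hc 0 le_rfl]
  · rw [newtonSum, sum_eq_single_of_mem 0 (mem_range.2 hN) fun δ _ hδ ↦ ?_]
    · simp
    · simp [Ring.choose_zero_pos ℤ (Nat.pos_of_ne_zero hδ)]

theorem newtonSum_add_natCast {N : ℕ} {c : ℕ → M} (hc : ∀ δ, N ≤ δ → c δ = 0) (q : ℕ) (x : ℤ) :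
    newtonSum N c (x + q) =
      newtonSum N c x + newtonSum N (fun δ ↦ ∑ j ∈ Icc 1 q, q.choose j • c (δ + j)) x := by
  have h := shift_eq_sum_fwdDiff_iter 1 (newtonSum N c) q x
  rw [nsmul_one, range_eq_Ico, sum_eq_sum_Ico_succ_bot (by omega : 0 < q + 1), zero_add,
    Ico_add_one_right_eq_Icc] at h
  rw [h, Nat.choose_zero_right, one_smul, Function.iterate_zero, id]
  simp_rw [fwdDiff_iter_newtonSum hc]
  simp only [newtonSum, smul_sum]
  rw [sum_comm]
  exact congrArg _ (sum_congr rfl fun _ _ ↦ sum_congr rfl fun _ _ ↦ smul_comm _ _ _)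

theorem newtonSum_eq_zero_iff {N : ℕ} {c : ℕ → M} (hc : ∀ δ, N ≤ δ → c δ = 0) :
    newtonSum N c = 0 ↔ c = 0 := by
  refine ⟨fun h ↦ funext fun k ↦ ?_, fun h ↦ by ext x; simp [newtonSum, h]⟩
  have hk : ∀ δ, N ≤ δ → c (δ + k) = 0 := fun δ hδ ↦ hc _ (by omega)
  rw [Pi.zero_apply, ← zero_add k, ← newtonSum_apply_zero hk, ← fwdDiff_iter_newtonSum hc, h]
  simp [fwdDiff_iter_eq_sum_shift]

end NewtonSum

theorem stmt_13_general (r : ℕ) (q : ℕ) (c : ℕ →₀ ZMod r)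
    (f : ℤ → ZMod r)
    (hf : ∀ x : ℤ, f x = c.sum fun δ a => ((ibinom x δ : ℤ) : ZMod r) * a) :
    (∀ x : ℤ, f (x + q) = f x) ↔
      (∀ δ : ℕ, ∑ j ∈ Finset.Icc 1 q, ((q.choose j : ℕ) : ZMod r) * c (δ + j) = 0) := by
  obtain ⟨N, hN⟩ := c.support.exists_nat_subset_range
  have hc : ∀ δ, N ≤ δ → c δ = 0 := fun δ hδ ↦
    Finsupp.notMem_support_iff.1 fun h ↦ (mem_range.1 (hN h)).not_ge hδ
  have hfN : f = newtonSum N c := by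
    ext x
    rw [hf, Finsupp.sum_of_support_subset c hN _ fun _ _ ↦ mul_zero _]
    simp [newtonSum, ibinom, zsmul_eq_mul]
  set d : ℕ → ZMod r := fun δ ↦ ∑ j ∈ Icc 1 q, q.choose j • c (δ + j)
  have hd : ∀ δ, N ≤ δ → d δ = 0 := fun δ hδ ↦
    sum_eq_zero fun j _ ↦ by rw [hc _ (by omega), smul_zero]
  calc (∀ x : ℤ, f (x + q) = f x) ↔ newtonSum N d = 0 := by
        simp [hfN, newtonSum_add_natCast hc, funext_iff, d]
    _ ↔ d = 0 := newtonSum_eq_zero_iff hd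
    _ ↔ _ := by simp [funext_iff, d, nsmul_eq_mul]

/-- A polyfract `f(x) = Σ_δ c(δ)·binom(x,δ)` over `ZMod r` is `q`-periodic iff
`Σ_{j=1}^{q} C(q,j)·c(δ+j) = 0` for every `δ ∈ ℕ`. -/
theorem stmt_13 (r : ℕ) (q : ℕ) (hq : 1 ≤ q) (c : ℕ →₀ ZMod r)
    (f : ℤ → ZMod r)
    (hf : ∀ x : ℤ, f x = c.sum fun δ a => ((ibinom x δ : ℤ) : ZMod r) * a) :
    (∀ x : ℤ, f (x + q) = f x) ↔
      (∀ δ : ℕ, ∑ j ∈ Finset.Icc 1 q, ((q.choose j : ℕ) : ZMod r) * c (δ + j) = 0) :=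
  stmt_13_general r q c f hf
end

section
/- Let p be a prime and α ∈ ℕ. Let c : ℕ → ZMod p be a finitely supported family of coefficients and define f : ℤ → ZMod p by f(x) := Σ_δ c(δ)·binom(x,δ). Then f is p^α-periodic if and only if c(δ) = 0 for all δ ≥ p^α. In other words, the p^α-periodic polyfractal maps ℤ → ZMod p are exactly the polyfractal maps of degree less than p^α. -/
section Aux

variable (p : ℕ)

/-- The shift endomorphism on functions `ℤ → ZMod p`. -/
noncomputable def shiftE : Module.End (ZMod p) (ℤ → ZMod p) where
  toFun g := fun x => g (x + 1)
  map_add' _ _ := rfl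
  map_smul' _ _ := rfl

lemma shiftE_pow (n : ℕ) (g : ℤ → ZMod p) (x : ℤ) :
    ((shiftE p ^ n) g) x = g (x + n) := by
  induction n generalizing g x with
  | zero => simp
  | succ n ih =>
    rw [pow_succ']
    show ((shiftE p ^ n) g) (x + 1) = g (x + (n + 1 : ℕ))
    rw [ih]
    push_cast
    ring_nf

lemma ibinom_pascal (x : ℤ) (δ : ℕ) :
    ibinom (x + 1) (δ + 1) = ibinom x δ + ibinom x (δ + 1) := by
  simpa [ibinom] using Ring.choose_succ_succ x δ

lemma key (N : ℕ) (c : ℕ → ZMod p) (hcN : ∀ δ, N ≤ δ → c δ = 0) (k : ℕ) :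
    ((shiftE p - 1) ^ k) (fun x => ∑ δ ∈ Finset.range N, ((ibinom x δ : ℤ) : ZMod p) * c δ)
      = fun x => ∑ δ ∈ Finset.range N, ((ibinom x δ : ℤ) : ZMod p) * c (δ + k) := by
  induction k with
  | zero => simp
  | succ k ih =>
    rw [pow_succ', Module.End.mul_apply, ih]
    funext x
    have happ : ((shiftE p - 1) (fun x => ∑ δ ∈ Finset.range N,
        ((ibinom x δ : ℤ) : ZMod p) * c (δ + k))) x
        = (∑ δ ∈ Finset.range N, ((ibinom (x+1) δ : ℤ) : ZMod p) * c (δ + k))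
          - ∑ δ ∈ Finset.range N, ((ibinom x δ : ℤ) : ZMod p) * c (δ + k) := by
      simp [shiftE, LinearMap.sub_apply]
    rw [happ, ← Finset.sum_sub_distrib]
    cases N with
    | zero => simp
    | succ M =>
      rw [Finset.sum_range_succ' (fun δ => ((ibinom (x+1) δ : ℤ) : ZMod p) * c (δ + k)
          - ((ibinom x δ : ℤ) : ZMod p) * c (δ + k))]
      rw [Finset.sum_range_succ (fun δ => ((ibinom x δ : ℤ) : ZMod p) * c (δ + (k+1)))]
      have h0 : ((ibinom (x+1) 0 : ℤ) : ZMod p) * c (0 + k)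
          - ((ibinom x 0 : ℤ) : ZMod p) * c (0 + k) = 0 := by
        simp [ibinom, Ring.choose_zero_right]
      have htop : c (M + (k + 1)) = 0 := hcN _ (by omega)
      rw [h0, htop, add_zero, mul_zero, add_zero]
      refine Finset.sum_congr rfl fun δ _ => ?_
      have : ((ibinom (x+1) (δ+1) : ℤ) : ZMod p)
          = ((ibinom x δ : ℤ) : ZMod p) + ((ibinom x (δ+1) : ℤ) : ZMod p) := by
        rw [ibinom_pascal]; push_cast; ring
      rw [this]
      have : δ + 1 + k = δ + (k + 1) := by omega
      rw [this]
      ring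

end Aux

/-- A polyfract `f(x) = Σ_δ c(δ)·binom(x,δ)` over `ZMod p`, `p` prime, is
`p^α`-periodic iff all coefficients `c(δ)` with `δ ≥ p^α` vanish; i.e. the
`p^α`-periodic polyfractal maps `ℤ → ZMod p` are exactly those of degree `< p^α`. -/
theorem stmt_14 (p : ℕ) (hp : p.Prime) (α : ℕ) (c : ℕ →₀ ZMod p)
    (f : ℤ → ZMod p)
    (hf : ∀ x : ℤ, f x = c.sum fun δ a => ((ibinom x δ : ℤ) : ZMod p) * a) :
    (∀ x : ℤ, f (x + p ^ α) = f x) ↔ (∀ δ : ℕ, p ^ α ≤ δ → c δ = 0) := by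
  haveI : Fact p.Prime := ⟨hp⟩
  haveI hCharP : CharP (Module.End (ZMod p) (ℤ → ZMod p)) p := by
    refine charP_of_injective_algebraMap (R := ZMod p) (fun a b hab => ?_) p
    have := congrFun (congrArg (fun (T : Module.End (ZMod p) (ℤ → ZMod p)) =>
      T (fun _ => (1 : ZMod p))) hab) 0
    simpa [Module.algebraMap_end_apply] using this
  obtain ⟨N, hN⟩ := c.support.exists_nat_subset_range
  have hcN : ∀ δ, N ≤ δ → c δ = 0 := by
    intro δ hδ
    by_contra h
    have := Finset.mem_range.mp (hN (Finsupp.mem_support_iff.mpr h))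
    omega
  have hf' : f = fun x => ∑ δ ∈ Finset.range N, ((ibinom x δ : ℤ) : ZMod p) * c δ := by
    funext x
    rw [hf]
    exact Finsupp.sum_of_support_subset c hN _ (by simp)
  set E := shiftE p with hE
  have hsub : (E - 1) ^ (p ^ α) = E ^ (p ^ α) - 1 := by
    simpa using sub_pow_char_pow_of_commute p α (Commute.one_right E)
  have hdiff : ∀ x : ℤ, (((E - 1) ^ (p ^ α)) f) x = f (x + (p ^ α : ℕ)) - f x := by
    intro x
    rw [hsub, LinearMap.sub_apply, Module.End.one_apply, Pi.sub_apply, shiftE_pow]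
  have hcoef : ∀ k : ℕ, (((E - 1) ^ k) f) 0 = c k := by
    intro k
    rw [hf', key p N (⇑c) hcN k]
    show ∑ δ ∈ Finset.range N, ((ibinom 0 δ : ℤ) : ZMod p) * c (δ + k) = c k
    have : ∀ δ ∈ Finset.range N, ((ibinom 0 δ : ℤ) : ZMod p) * c (δ + k)
        = if δ = 0 then c k else 0 := by
      intro δ _
      rcases Nat.eq_zero_or_pos δ with h | h
      · simp [h, ibinom, Ring.choose_zero_right]
      · simp [Nat.pos_iff_ne_zero.mp h, ibinom, Ring.choose_zero_pos ℤ h]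
    rw [Finset.sum_congr rfl this, Finset.sum_ite_eq' (Finset.range N) 0 (fun _ => c k)]
    rcases Nat.eq_zero_or_pos N with h | h
    · simp [h, hcN k (by omega)]
    · simp [Finset.mem_range.mpr h]
  constructor
  · intro hper δ hδ
    have hper' : ∀ x : ℤ, f (x + ((p ^ α : ℕ) : ℤ)) = f x := by
      intro x
      rw [Nat.cast_pow]
      exact hper x
    have hzero : ((E - 1) ^ (p ^ α)) f = 0 := by
      funext x
      rw [hdiff x, hper' x, sub_self]
      rfl
    have : ((E - 1) ^ δ) f = 0 := by
      have hsplit : (E - 1) ^ δ = (E - 1) ^ (δ - p ^ α) * (E - 1) ^ (p ^ α) := by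
        rw [← pow_add, Nat.sub_add_cancel hδ]
      rw [hsplit, Module.End.mul_apply, hzero, map_zero]
    rw [← hcoef δ, this]
    rfl
  · intro hvan x
    have : (((E - 1) ^ (p ^ α)) f) x = 0 := by
      rw [hf', key p N (⇑c) hcN (p ^ α)]
      refine Finset.sum_eq_zero fun δ _ => ?_
      rw [hvan (δ + p ^ α) (by omega), mul_zero]
    rw [hdiff x] at this
    have h2 := sub_eq_zero.mp this
    rw [Nat.cast_pow] at h2
    exact h2
end

section
/- Let r ≥ 2 and let r' ≥ 1 be coprime to r, and let q ≥ 1. If f : ℤ → ZMod r is a polyfractal function that is (q·r')-periodic, then f is already q-periodic. In particular, every r'-periodic polyfractal function f : ℤ → ZMod r is constant. -/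
/-- `f : ℤ → ZMod r` is polyfractal if it is represented by a finitely supported
family of coefficients. -/
noncomputable def IsPolyfractal (r : ℕ) (f : ℤ → ZMod r) : Prop :=
  ∃ c : ℕ →₀ ZMod r, ∀ x : ℤ, f x = c.sum fun δ a => ((ibinom x δ : ℤ) : ZMod r) * a

/-!
By Vandermonde, `binom(x + N, δ) = Σ binom(x, δ - j) binom(N, j)`, and for `N = r ^ (D + 1)` every
`binom(N, j)` with `0 < j ≤ D` is divisible by `r`. Hence a polyfractal function of degree at
most `D` is `r ^ (D + 1)`-periodic. The periods of a function on `ℤ` form a subgroup, so a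
`q r'`-periodic polyfractal function is also `gcd(r ^ (D + 1), q r')`-periodic, and this gcd
divides `q` because `r'` is coprime to `r`.
-/

open Function

theorem Nat.dvd_choose_mul_self (n j : ℕ) : n ∣ n.choose j * j := by
  cases n with
  | zero => cases j <;> simp
  | succ n =>
    cases j with
    | zero => simp
    | succ j => exact ⟨n.choose j, (Nat.add_one_mul_choose_eq n j).symm⟩

theorem Nat.dvd_of_pow_succ_dvd_mul {r m j k : ℕ} (hj : 0 < j) (hjk : j ≤ k)
    (h : r ^ (k + 1) ∣ m * j) : r ∣ m := by
  rcases Nat.eq_zero_or_pos m with rfl | hm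
  · exact dvd_zero r
  rcases Nat.eq_zero_or_pos r with rfl | hr
  · simp [Nat.pos_iff_ne_zero.mp hm, Nat.pos_iff_ne_zero.mp hj] at h
  rw [← Nat.factorization_le_iff_dvd hr.ne' hm.ne']
  rw [← Nat.factorization_le_iff_dvd (by positivity) (by positivity), Nat.factorization_pow,
    Nat.factorization_mul hm.ne' hj.ne'] at h
  intro p
  have hp : (k + 1) * r.factorization p ≤ m.factorization p + j.factorization p := h p
  -- `v_p(j) < j ≤ k ≤ k · v_p(r)` once `p ∣ r`
  have hjp : j.factorization p < j := Nat.factorization_lt p hj.ne'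
  rcases Nat.eq_zero_or_pos (r.factorization p) with h0 | h0
  · simp [h0]
  · nlinarith

theorem Nat.dvd_choose_pow_succ {r k j : ℕ} (hj : 0 < j) (hjk : j ≤ k) :
    r ∣ (r ^ (k + 1)).choose j :=
  Nat.dvd_of_pow_succ_dvd_mul hj hjk (Nat.dvd_choose_mul_self _ _)

theorem Int.cast_choose_add_natCast {r N δ : ℕ} (hN : ∀ j, 0 < j → j ≤ δ → r ∣ N.choose j)
    (x : ℤ) : ((Ring.choose (x + N) δ : ℤ) : ZMod r) = Ring.choose x δ := by
  rw [Ring.add_choose_eq δ (Commute.all _ _), Int.cast_sum,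
    Finset.sum_eq_single_of_mem (δ, 0) (by simp)]
  · simp
  · rintro ⟨i, j⟩ hij hne
    have hij : i + j = δ := Finset.HasAntidiagonal.mem_antidiagonal.mp hij
    have hj : 0 < j := Nat.pos_of_ne_zero fun h => hne (by simp [h, ← hij])
    rw [Ring.choose_natCast, Int.cast_mul, Int.cast_natCast,
      (ZMod.natCast_eq_zero_iff _ _).mpr (hN j hj (by omega)), mul_zero]

theorem IsPolyfractal.exists_periodic_pow {r : ℕ} {f : ℤ → ZMod r} (hf : IsPolyfractal r f) :
    ∃ k : ℕ, Periodic f (r ^ k : ℕ) := by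
  obtain ⟨c, hc⟩ := hf
  refine ⟨c.support.sup id + 1, fun x => ?_⟩
  rw [hc, hc]
  refine Finsupp.sum_congr fun δ hδ => ?_
  have hδD : δ ≤ c.support.sup id := Finset.le_sup (f := id) hδ
  rw [ibinom, ibinom, Int.cast_choose_add_natCast fun j hj hjδ =>
    Nat.dvd_choose_pow_succ hj (hjδ.trans hδD)]

theorem Function.Periodic.intGcd {α : Type*} {f : ℤ → α} {a b : ℤ} (ha : Periodic f a)
    (hb : Periodic f b) : Periodic f (Int.gcd a b) := by
  rw [Int.gcd_eq_gcd_ab, mul_comm a, mul_comm b]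
  exact (ha.int_mul _).add_period (hb.int_mul _)

theorem IsPolyfractal.periodic_of_periodic_mul_coprime {r r' q : ℕ} {f : ℤ → ZMod r}
    (hf : IsPolyfractal r f) (hco : r.Coprime r') (hper : Periodic f (q * r' : ℕ)) :
    Periodic f q := by
  obtain ⟨k, hk⟩ := hf.exists_periodic_pow
  have hgcd : Periodic f ((r ^ k).gcd q : ℕ) := by
    have := hk.intGcd hper
    rwa [Int.gcd_natCast_natCast,
      Nat.Coprime.gcd_mul_right_cancel_right q (hco.pow_left k).symm] at this
  obtain ⟨m, hm⟩ := Nat.gcd_dvd_right (r ^ k) q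
  rw [hm, Nat.cast_mul, mul_comm]
  exact hgcd.nat_mul m

theorem stmt_15_general (r r' q : ℕ) (hco : Nat.Coprime r r')
    (f : ℤ → ZMod r) (hpoly : IsPolyfractal r f) :
    ((∀ x : ℤ, f (x + (q * r' : ℕ)) = f x) → ∀ x : ℤ, f (x + (q : ℕ)) = f x) ∧
      ((∀ x : ℤ, f (x + (r' : ℕ)) = f x) → ∃ b : ZMod r, ∀ x : ℤ, f x = b) := by
  refine ⟨hpoly.periodic_of_periodic_mul_coprime hco, fun hper => ⟨f 0, fun x => ?_⟩⟩
  have h1 : Periodic f (1 : ℕ) :=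
    hpoly.periodic_of_periodic_mul_coprime (q := 1) hco (by simpa using hper)
  simpa using h1.int_mul_eq x

/-- For `r'` coprime to `r ≥ 2`: any `q·r'`-periodic polyfractal map `ℤ → ZMod r` is
already `q`-periodic; in particular, any `r'`-periodic polyfractal map is constant. -/
theorem stmt_15 (r r' q : ℕ) (hr : 2 ≤ r) (hr' : 1 ≤ r') (hco : Nat.Coprime r r')
    (hq : 1 ≤ q) (f : ℤ → ZMod r) (hpoly : IsPolyfractal r f) :
    ((∀ x : ℤ, f (x + (q * r' : ℕ)) = f x) → ∀ x : ℤ, f (x + (q : ℕ)) = f x) ∧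
      ((∀ x : ℤ, f (x + (r' : ℕ)) = f x) → ∃ b : ZMod r, ∀ x : ℤ, f x = b) :=
  stmt_15_general r r' q hco f hpoly
end
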